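/- arXiv:2108.03179 — 2 statements merged into one kernel-verified Lean document; each statement's English description precedes it below -/
import Mathlib

section
/- Let a triangle have vertices A₁, A₂, A₃, and let D on edge A₂A₃ and E on edge A₁A₃ with k₁ = |A₃D|/|A₂A₃| ∈ [0,1] and k₂ = |A₃E|/|A₁A₃| ∈ [0,1]. Then the quantity γᵀδ defined in the IFE unisolvence proof equals k₁k₂, and in particular γᵀδ ∈ [0,1]. -/
open scoped InnerProductSpace
open FiniteDimensional

lemma integral_aux (a b C : ℝ) : (∫ s in (0:ℝ)..1, (a + s*b)*C) = (a + b/2)*C := by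
  have h : ∀ s:ℝ, (a + s*b)*C = a*C + s*(b*C) := fun s => by ring
  simp_rw [h]
  rw [intervalIntegral.integral_add intervalIntegrable_const
    ((intervalIntegral.intervalIntegrable_id).mul_const _)]
  rw [intervalIntegral.integral_const, intervalIntegral.integral_mul_const, integral_id]
  simp; ring

theorem stmt3 (A₁ A₂ A₃ D Ept nh : EuclideanSpace ℝ (Fin 2)) (k₁ k₂ : ℝ)
    (hind : AffineIndependent ℝ ![A₁, A₂, A₃])
    (hk₁ : k₁ ∈ Set.Icc (0:ℝ) 1) (hk₂ : k₂ ∈ Set.Icc (0:ℝ) 1)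
    (hD : D = A₃ + k₁ • (A₂ - A₃)) (hE : Ept = A₃ + k₂ • (A₁ - A₃))
    (hn : ‖nh‖ = 1) (hperp : ⟪nh, D - Ept⟫_ℝ = 0)
    (lam₁ lam₂ : EuclideanSpace ℝ (Fin 2) →ᵃ[ℝ] ℝ)
    (h11 : lam₁ (midpoint ℝ A₂ A₃) = 1) (h12 : lam₁ (midpoint ℝ A₁ A₃) = 0)
    (h13 : lam₁ (midpoint ℝ A₁ A₂) = 0)
    (h21 : lam₂ (midpoint ℝ A₂ A₃) = 0) (h22 : lam₂ (midpoint ℝ A₁ A₃) = 1)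
    (h23 : lam₂ (midpoint ℝ A₁ A₂) = 0) :
    lam₁.linear nh *
        ((1 / ‖A₂ - A₃‖) * ∫ s in (0:ℝ)..1, ⟪nh, (A₃ + s • (D - A₃)) - D⟫_ℝ * ‖D - A₃‖)
      + lam₂.linear nh *
        ((1 / ‖A₁ - A₃‖) * ∫ s in (0:ℝ)..1, ⟪nh, (A₃ + s • (Ept - A₃)) - D⟫_ℝ * ‖Ept - A₃‖)
      = k₁ * k₂ ∧ k₁ * k₂ ∈ Set.Icc (0:ℝ) 1 := by
  obtain ⟨hk₁0, hk₁1⟩ := hk₁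
  obtain ⟨hk₂0, hk₂1⟩ := hk₂
  set u := A₂ - A₃ with hu
  set w := A₁ - A₃ with hw
  set p := ⟪nh, u⟫_ℝ with hp
  set q := ⟪nh, w⟫_ℝ with hq
  -- basic vector identities
  have hDA : D - A₃ = k₁ • u := by rw [hD]; abel
  have hEA : Ept - A₃ = k₂ • w := by rw [hE]; abel
  -- perpendicularity gives k₁ p = k₂ q
  have hpq : k₁ * p = k₂ * q := by
    have : D - Ept = k₁ • u - k₂ • w := by rw [hD, hE]; abel
    have h2 := hperp
    rw [this, inner_sub_right, real_inner_smul_right, real_inner_smul_right] at h2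
    linarith
  -- nondegeneracy
  have h12ne : A₁ ≠ A₃ := by
    have := hind.injective.ne (show (0:Fin 3) ≠ 2 by decide)
    simpa using this
  have h23ne : A₂ ≠ A₃ := by
    have := hind.injective.ne (show (1:Fin 3) ≠ 2 by decide)
    simpa using this
  have hune : ‖u‖ ≠ 0 := by simpa [hu, sub_eq_zero] using h23ne
  have hwne : ‖w‖ ≠ 0 := by simpa [hw, sub_eq_zero] using h12ne
  -- norms
  have hnD : ‖D - A₃‖ = k₁ * ‖u‖ := by
    rw [hDA, norm_smul, Real.norm_eq_abs, abs_of_nonneg hk₁0]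
  have hnE : ‖Ept - A₃‖ = k₂ * ‖w‖ := by
    rw [hEA, norm_smul, Real.norm_eq_abs, abs_of_nonneg hk₂0]
  -- integrals
  have hI1 : (∫ s in (0:ℝ)..1, ⟪nh, (A₃ + s • (D - A₃)) - D⟫_ℝ * ‖D - A₃‖)
      = (-(k₁*p) + (k₁*p)/2) * (k₁ * ‖u‖) := by
    have : ∀ s : ℝ, ⟪nh, (A₃ + s • (D - A₃)) - D⟫_ℝ * ‖D - A₃‖
        = (-(k₁*p) + s * (k₁*p)) * (k₁ * ‖u‖) := by
      intro s
      have hv : (A₃ + s • (D - A₃)) - D = -(k₁ • u) + s • (k₁ • u) := by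
        rw [hDA, hD]; abel
      rw [hv, inner_add_right, inner_neg_right, real_inner_smul_right,
        real_inner_smul_right, real_inner_smul_right, hnD]
    simp_rw [this]
    rw [integral_aux]
  have hI2 : (∫ s in (0:ℝ)..1, ⟪nh, (A₃ + s • (Ept - A₃)) - D⟫_ℝ * ‖Ept - A₃‖)
      = (-(k₁*p) + (k₂*q)/2) * (k₂ * ‖w‖) := by
    have : ∀ s : ℝ, ⟪nh, (A₃ + s • (Ept - A₃)) - D⟫_ℝ * ‖Ept - A₃‖
        = (-(k₁*p) + s * (k₂*q)) * (k₂ * ‖w‖) := by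
      intro s
      have hv : (A₃ + s • (Ept - A₃)) - D = -(k₁ • u) + s • (k₂ • w) := by
        rw [hEA, hD]; abel
      rw [hv, inner_add_right, inner_neg_right, real_inner_smul_right,
        real_inner_smul_right, real_inner_smul_right, hnE]
    simp_rw [this]
    rw [integral_aux]
  -- values of the linear parts on u and w
  have lam_vals : ∀ (f : EuclideanSpace ℝ (Fin 2) →ᵃ[ℝ] ℝ) (x y z : ℝ),
      f (midpoint ℝ A₂ A₃) = x → f (midpoint ℝ A₁ A₃) = y → f (midpoint ℝ A₁ A₂) = z →
      f.linear u = -2*(y - z) ∧ f.linear w = -2*(x - z) := by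
    intro f x y z hx hy hz
    have e1 : f.linear (midpoint ℝ A₂ A₃ - midpoint ℝ A₁ A₂) = x - z := by
      rw [show midpoint ℝ A₂ A₃ - midpoint ℝ A₁ A₂ = midpoint ℝ A₂ A₃ -ᵥ midpoint ℝ A₁ A₂ from rfl,
        f.linearMap_vsub, hx, hz]; rfl
    have e2 : f.linear (midpoint ℝ A₁ A₃ - midpoint ℝ A₁ A₂) = y - z := by
      rw [show midpoint ℝ A₁ A₃ - midpoint ℝ A₁ A₂ = midpoint ℝ A₁ A₃ -ᵥ midpoint ℝ A₁ A₂ from rfl,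
        f.linearMap_vsub, hy, hz]; rfl
    have m1 : midpoint ℝ A₂ A₃ - midpoint ℝ A₁ A₂ = -((2⁻¹:ℝ) • w) := by
      rw [midpoint_eq_smul_add, midpoint_eq_smul_add, hw, ← smul_neg, ← smul_sub]
      congr 1; abel
    have m2 : midpoint ℝ A₁ A₃ - midpoint ℝ A₁ A₂ = -((2⁻¹:ℝ) • u) := by
      rw [midpoint_eq_smul_add, midpoint_eq_smul_add, hu, ← smul_neg, ← smul_sub]
      congr 1; abel
    rw [m1, map_neg, map_smul, smul_eq_mul] at e1
    rw [m2, map_neg, map_smul, smul_eq_mul] at e2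
    constructor <;> linarith
  obtain ⟨l1u, l1w⟩ := lam_vals lam₁ 1 0 0 h11 h12 h13
  obtain ⟨l2u, l2w⟩ := lam_vals lam₂ 0 1 0 h21 h22 h23
  norm_num at l1u l1w l2u l2w
  -- decompose nh in the basis (w, u)
  have hli : LinearIndependent ℝ ![w, u] := by
    rw [LinearIndependent.pair_iff]
    intro a b hab
    have h0 : a • A₁ + b • A₂ + (-(a+b)) • A₃ = 0 := by
      rw [hw, hu] at hab
      have : a • (A₁ - A₃) + b • (A₂ - A₃) = a • A₁ + b • A₂ + (-(a+b)) • A₃ := by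
        simp [smul_sub, add_smul, neg_smul]; abel
      rw [this] at hab; exact hab
    have key := affineIndependent_iff.mp hind Finset.univ ![a, b, -(a+b)]
      (by simp [Fin.sum_univ_three])
      (by simpa [Fin.sum_univ_three] using h0)
    constructor
    · simpa using key 0 (Finset.mem_univ _)
    · simpa using key 1 (Finset.mem_univ _)
  have hcard : Fintype.card (Fin 2) = Module.finrank ℝ (EuclideanSpace ℝ (Fin 2)) := by simp
  set b := basisOfLinearIndependentOfCardEqFinrank hli hcard with hbdef
  have hb0 : b 0 = w := by
    rw [hbdef, coe_basisOfLinearIndependentOfCardEqFinrank]; rfl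
  have hb1 : b 1 = u := by
    rw [hbdef, coe_basisOfLinearIndependentOfCardEqFinrank]; rfl
  obtain ⟨α, β, hnh⟩ : ∃ α β : ℝ, nh = α • w + β • u := by
    refine ⟨b.repr nh 0, b.repr nh 1, ?_⟩
    conv_lhs => rw [← b.sum_repr nh]
    rw [Fin.sum_univ_two, hb0, hb1]
  -- ⟪nh, nh⟫ = 1
  have hnorm : α * q + β * p = 1 := by
    have h1 : ⟪nh, nh⟫_ℝ = 1 := by
      rw [real_inner_self_eq_norm_sq, hn]; norm_num
    calc α * q + β * p = ⟪nh, α • w + β • u⟫_ℝ := by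
          rw [inner_add_right, real_inner_smul_right, real_inner_smul_right]
      _ = 1 := by rw [← hnh]; exact h1
  -- γ components
  have g1 : lam₁.linear nh = -2 * α := by
    rw [hnh, map_add, map_smul, map_smul, l1u, l1w, smul_eq_mul, smul_eq_mul]; ring
  have g2 : lam₂.linear nh = -2 * β := by
    rw [hnh, map_add, map_smul, map_smul, l2u, l2w, smul_eq_mul, smul_eq_mul]; ring
  have key : α*(k₁^2*p) + 2*β*(k₁*k₂*p) - β*(k₂^2*q) = k₁*k₂ := by
    linear_combination k₁*k₂*hnorm + (α*k₁ + β*k₂)*hpq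
  have e1 : (1/‖u‖) * ((-(k₁*p) + (k₁*p)/2) * (k₁ * ‖u‖)) = -(k₁^2*p)/2 := by
    field_simp; ring
  have e2 : (1/‖w‖) * ((-(k₁*p) + (k₂*q)/2) * (k₂ * ‖w‖)) = k₂*(-(k₁*p) + (k₂*q)/2) := by
    field_simp
  constructor
  · rw [hI1, hI2, g1, g2, e1, e2]
    linear_combination key
  · refine ⟨mul_nonneg hk₁0 hk₂0, ?_⟩
    calc k₁ * k₂ ≤ 1 * 1 := by
          exact mul_le_mul hk₁1 hk₂1 hk₂0 zero_le_one
      _ = 1 := by norm_num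
end

section
/- Let T ⊂ ℝ² be a triangle with vertices A₁, A₂, A₃ split by a segment DE (D on edge A₂A₃, E on edge A₁A₃) into two subregions, and let β⁺_c, β⁻_c > 0. For any prescribed edge averages N₁, N₂, N₃, there exists a unique piecewise linear function φ (linear on each subregion) that is continuous across DE, satisfies β⁺_c ∇φ⁺·n_h = β⁻_c ∇φ⁻·n_h where n_h is the unit normal of DE, and has average Nᵢ over edge eᵢ for i = 1,2,3. -/
/-!
Both pieces are affine, so through the affine basis `A₁, A₂, A₃` the pair `(φ⁺, φ⁻)` is encoded by
its six vertex values, and every condition is linear in them (the edge averages have closed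
forms). The result is a square linear system, so it suffices that its kernel is trivial.

For the homogeneous problem, continuity at `D` and `E` forces the gradient of the jump `φ⁻ - φ⁺`
to be `c n_h`. The edge averages then give `∇φ⁺ · n_h = -c k₁ k₂`, and the flux condition becomes
`c (β⁻ + (β⁺ - β⁻) k₁ k₂) = 0`. The coefficient is a convex combination of `β⁺` and `β⁻`, hence
positive, so `c = 0` and all vertex values vanish.
-/

open scoped InnerProductSpace

theorem AffineMap.apply_add_smul_sub {k V : Type*} [CommRing k] [AddCommGroup V] [Module k V]
    (f : V →ᵃ[k] k) (P Q : V) (t : k) : f (P + t • (Q - P)) = f P + t * (f Q - f P) := by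
  have h := f.apply_lineMap P Q t
  simp only [AffineMap.lineMap_apply, vsub_eq_sub, vadd_eq_add, smul_eq_mul] at h
  rw [add_comm P, h]
  ring

theorem AffineBasis.bijective_affineMap_eval {ι k P V : Type*} [Fintype ι] [CommRing k]
    [AddCommGroup V] [Module k V] [AddTorsor V P] (b : AffineBasis ι k P) :
    Function.Bijective fun (f : P →ᵃ[k] k) i => f (b i) := by
  classical
  refine ⟨fun f g hfg => AffineMap.ext_on b.tot ?_,
    fun w => ⟨(Fintype.linearCombination k w).toAffineMap.comp b.coords, ?_⟩⟩
  · rintro - ⟨i, rfl⟩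
    exact congrFun hfg i
  · ext j
    simp [Fintype.linearCombination_apply, b.coords_apply, b.coord_apply]

theorem integral_const_add_mul_id (a c k : ℝ) :
    ∫ s in (0:ℝ)..k, (a + s * c) = k * a + k ^ 2 / 2 * c := by
  rw [intervalIntegral.integral_add intervalIntegrable_const
      ((by fun_prop : Continuous fun s : ℝ => s * c).intervalIntegrable _ _),
    intervalIntegral.integral_const, intervalIntegral.integral_mul_const, integral_id]
  simp only [smul_eq_mul]
  ring

section Segment

variable {V : Type*} [AddCommGroup V] [Module ℝ V]

theorem AffineMap.integral_segment (f : V →ᵃ[ℝ] ℝ) (P Q : V) :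
    ∫ s in (0:ℝ)..1, f (P + s • (Q - P)) = (f P + f Q) / 2 := by
  simp only [f.apply_add_smul_sub, integral_const_add_mul_id]
  ring

theorem AffineMap.integral_segment_ite (f g : V →ᵃ[ℝ] ℝ) (P Q : V) {k : ℝ}
    (hk : k ∈ Set.Icc (0:ℝ) 1) :
    ∫ s in (0:ℝ)..1, (if s ≤ k then g else f) (P + s • (Q - P)) =
      (f P + f Q) / 2 + k * (g P - f P) + k ^ 2 / 2 * ((g Q - g P) - (f Q - f P)) := by
  have hsplit : ∀ s : ℝ, (if s ≤ k then g else f) (P + s • (Q - P)) =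
      (f P + s * (f Q - f P)) +
        {x | x ≤ k}.indicator (fun s => (g P - f P) + s * ((g Q - g P) - (f Q - f P))) s := by
    intro s
    by_cases hs : s ≤ k
    · simp only [hs, if_true, Set.indicator_of_mem (show s ∈ {x | x ≤ k} from hs),
        g.apply_add_smul_sub]
      ring
    · simp only [hs, if_false, Set.indicator_of_notMem (show s ∉ {x | x ≤ k} from hs),
        f.apply_add_smul_sub, add_zero]
  have hint : IntervalIntegrable
      ({x | x ≤ k}.indicator fun s => (g P - f P) + s * ((g Q - g P) - (f Q - f P)))
      MeasureTheory.volume 0 1 := by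
    rw [intervalIntegrable_iff]
    exact ((by fun_prop : Continuous fun s : ℝ => (g P - f P) + s * ((g Q - g P) - (f Q - f P))
      ).integrableOn_Ioc).indicator measurableSet_Iic
  simp only [hsplit]
  rw [intervalIntegral.integral_add ((by fun_prop : Continuous fun s : ℝ =>
      f P + s * (f Q - f P)).intervalIntegrable _ _) hint,
    intervalIntegral.integral_indicator hk, integral_const_add_mul_id, integral_const_add_mul_id]
  ring

end Segment

theorem AffineIndependent.exists_eq_smul_sub_add_smul_sub {k V : Type*} [Field k] [AddCommGroup V]
    [Module k V] [FiniteDimensional k V] {A₁ A₂ A₃ : V} (hind : AffineIndependent k ![A₁, A₂, A₃])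
    (hV : Module.finrank k V = 2) (v : V) : ∃ x y : k, v = x • (A₁ - A₃) + y • (A₂ - A₃) := by
  have hv : v ∈ vectorSpan k (Set.range ![A₁, A₂, A₃]) := by
    rw [hind.vectorSpan_eq_top_of_card_eq_finrank_add_one (by simp [hV])]
    trivial
  rw [vectorSpan_range_eq_span_range_vsub_right k _ 2,
    Submodule.mem_span_range_iff_exists_fun] at hv
  obtain ⟨c, hc⟩ := hv
  exact ⟨c 0, c 1, by simpa [Fin.sum_univ_three] using hc.symm⟩

/-- The six conditions on `(φ⁺, φ⁻)` in terms of their values `a, b` at `A₁, A₂, A₃` (indices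
`0, 1, 2`); `x, y` are the coordinates of `n_h` in the basis `A₁ - A₃, A₂ - A₃`. -/
noncomputable def transmissionSystem (k₁ k₂ βp βm x y : ℝ) :
    (Fin 3 → ℝ) × (Fin 3 → ℝ) →ₗ[ℝ] ℝ × ℝ × ℝ × ℝ × ℝ × ℝ where
  toFun v :=
    let a := v.1
    let b := v.2
    ((a 2 + k₁ * (a 1 - a 2)) - (b 2 + k₁ * (b 1 - b 2)),
     (a 2 + k₂ * (a 0 - a 2)) - (b 2 + k₂ * (b 0 - b 2)),
     βp * (x * (a 0 - a 2) + y * (a 1 - a 2)) - βm * (x * (b 0 - b 2) + y * (b 1 - b 2)),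
     (a 2 + a 1) / 2 + k₁ * (b 2 - a 2) + k₁ ^ 2 / 2 * ((b 1 - b 2) - (a 1 - a 2)),
     (a 2 + a 0) / 2 + k₂ * (b 2 - a 2) + k₂ ^ 2 / 2 * ((b 0 - b 2) - (a 0 - a 2)),
     (a 0 + a 1) / 2)
  map_add' u v := by
    simp only [Prod.fst_add, Prod.snd_add, Pi.add_apply, Prod.mk_add_mk, Prod.mk.injEq]
    refine ⟨?_, ?_, ?_, ?_, ?_, ?_⟩ <;> ring
  map_smul' c v := by
    simp only [Prod.smul_fst, Prod.smul_snd, Pi.smul_apply, smul_eq_mul, RingHom.id_apply,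
      Prod.smul_mk, Prod.mk.injEq]
    refine ⟨?_, ?_, ?_, ?_, ?_, ?_⟩ <;> ring

/- `u₁, u₂` are the values of a linear form on `A₁ - A₃, A₂ - A₃`, and `n, m` those of `⟪n_h, ·⟫`.
If the form vanishes on `D - E = k₁ (A₂ - A₃) - k₂ (A₁ - A₃)`, it is `⟪n_h, ·⟫` times its value
at `n_h = x (A₁ - A₃) + y (A₂ - A₃)`. -/
theorem slopes_parallel_normal {k₁ k₂ m n x y u₁ u₂ : ℝ} (hk₁ : k₁ ≠ 0) (hmn : k₁ * m = k₂ * n)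
    (hxy : x * n + y * m = 1) (hu : k₁ * u₂ = k₂ * u₁) :
    u₁ = (x * u₁ + y * u₂) * n ∧ u₂ = (x * u₁ + y * u₂) * m := by
  have hdet : n * (x * k₁ + y * k₂) = k₁ := by linear_combination k₁ * hxy - y * hmn
  have hdet' : m * (x * k₁ + y * k₂) = k₂ := by linear_combination k₂ * hxy + x * hmn
  have hdet₀ : x * k₁ + y * k₂ ≠ 0 := fun h => hk₁ (by rw [← hdet, h, mul_zero])
  constructor
  · refine mul_left_cancel₀ hdet₀ ?_
    linear_combination (-(x * u₁ + y * u₂)) * hdet - y * hu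
  · refine mul_left_cancel₀ hdet₀ ?_
    linear_combination (-(x * u₁ + y * u₂)) * hdet' + x * hu

theorem add_sub_mul_pos {βp βm t : ℝ} (hβp : 0 < βp) (hβm : 0 < βm) (ht : t ∈ Set.Icc 0 1) :
    0 < βm + (βp - βm) * t := by
  rcases le_total βm βp with h | h
  · nlinarith [ht.1]
  · nlinarith [ht.2]

theorem transmissionSystem_injective {k₁ k₂ βp βm x y m n : ℝ} (hk₁ : k₁ ∈ Set.Ioc 0 1)
    (hk₂ : k₂ ∈ Set.Icc 0 1) (hβp : 0 < βp) (hβm : 0 < βm) (hmn : k₁ * m = k₂ * n)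
    (hxy : x * n + y * m = 1) : Function.Injective (transmissionSystem k₁ k₂ βp βm x y) := by
  rw [← LinearMap.ker_eq_bot, LinearMap.ker_eq_bot']
  rintro ⟨a, b⟩ hv
  simp only [transmissionSystem, LinearMap.coe_mk, AddHom.coe_mk, Prod.mk_eq_zero] at hv
  obtain ⟨hD, hE, hflux, h₁, h₂, h₃⟩ := hv
  set u₁ := (b 0 - b 2) - (a 0 - a 2)
  set u₂ := (b 1 - b 2) - (a 1 - a 2)
  set c := x * u₁ + y * u₂ with hc
  obtain ⟨hcn, hcm⟩ := slopes_parallel_normal (u₁ := u₁) (u₂ := u₂) hk₁.1.ne' hmn hxy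
    (by linear_combination hE - hD)
  have ha₀ : a 0 - a 2 = -(c * m * k₁ ^ 2) := by
    linear_combination 2 * h₃ - 2 * h₁ - 2 * k₁ * hD - k₁ ^ 2 * hcm
  have ha₁ : a 1 - a 2 = -(c * n * k₂ ^ 2) := by
    linear_combination 2 * h₃ - 2 * h₂ - 2 * k₂ * hE - k₂ ^ 2 * hcn
  have hdn_a : x * (a 0 - a 2) + y * (a 1 - a 2) = -(c * (k₁ * k₂)) := by
    linear_combination x * ha₀ + y * ha₁ - c * (x * k₁ - y * k₂) * hmn - c * k₁ * k₂ * hxy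
  have hdn_b : x * (b 0 - b 2) + y * (b 1 - b 2) = x * (a 0 - a 2) + y * (a 1 - a 2) + c := by
    ring
  have hc_eq : c * (βm + (βp - βm) * (k₁ * k₂)) = 0 := by
    linear_combination -hflux + (βp - βm) * hdn_a - βm * hdn_b
  have hc_zero : c = 0 := (mul_eq_zero.1 hc_eq).resolve_right (add_sub_mul_pos hβp hβm
    ⟨mul_nonneg hk₁.1.le hk₂.1, mul_le_one₀ hk₁.2 hk₂.1 hk₂.2⟩).ne'
  rw [← hc, hc_zero, zero_mul] at hcn hcm
  rw [hc_zero, zero_mul, zero_mul, neg_zero] at ha₀ ha₁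
  have hb₂ : b 2 - a 2 = 0 := by linear_combination -hD - k₁ * hcm
  refine Prod.ext (funext fun i => ?_) (funext fun i => ?_) <;> fin_cases i <;>
    simp only [Prod.fst_zero, Prod.snd_zero, Pi.zero_apply, Fin.zero_eta, Fin.mk_one,
      Fin.reduceFinMk] <;> linarith

theorem transmissionSystem_bijective {k₁ k₂ βp βm x y m n : ℝ} (hk₁ : k₁ ∈ Set.Ioc 0 1)
    (hk₂ : k₂ ∈ Set.Icc 0 1) (hβp : 0 < βp) (hβm : 0 < βm) (hmn : k₁ * m = k₂ * n)
    (hxy : x * n + y * m = 1) : Function.Bijective (transmissionSystem k₁ k₂ βp βm x y) := by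
  have hinj := transmissionSystem_injective hk₁ hk₂ hβp hβm hmn hxy
  exact ⟨hinj, (LinearMap.injective_iff_surjective_of_finrank_eq_finrank (by simp)).1 hinj⟩

theorem stmt13 (A₁ A₂ A₃ D Ept nh : EuclideanSpace ℝ (Fin 2))
    (k₁ k₂ βp βm N₁ N₂ N₃ : ℝ)
    (hind : AffineIndependent ℝ ![A₁, A₂, A₃])
    (hk₁ : k₁ ∈ Set.Ioo (0:ℝ) 1) (hk₂ : k₂ ∈ Set.Ioo (0:ℝ) 1)
    (hD : D = A₃ + k₁ • (A₂ - A₃)) (hE : Ept = A₃ + k₂ • (A₁ - A₃))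
    (hn : ‖nh‖ = 1) (hperp : ⟪nh, D - Ept⟫_ℝ = 0)
    (hβp : 0 < βp) (hβm : 0 < βm) :
    ∃! p : (EuclideanSpace ℝ (Fin 2) →ᵃ[ℝ] ℝ) × (EuclideanSpace ℝ (Fin 2) →ᵃ[ℝ] ℝ),
      p.1 D = p.2 D ∧ p.1 Ept = p.2 Ept ∧
      βp * p.1.linear nh = βm * p.2.linear nh ∧
      (∫ s in (0:ℝ)..1, (if s ≤ k₁ then p.2 else p.1) (A₃ + s • (A₂ - A₃))) = N₁ ∧
      (∫ s in (0:ℝ)..1, (if s ≤ k₂ then p.2 else p.1) (A₃ + s • (A₁ - A₃))) = N₂ ∧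
      (∫ s in (0:ℝ)..1, p.1 (A₁ + s • (A₂ - A₁))) = N₃ := by
  obtain ⟨x, y, hnh⟩ := hind.exists_eq_smul_sub_add_smul_sub (by simp) nh
  have hmn : k₁ * ⟪nh, A₂ - A₃⟫_ℝ = k₂ * ⟪nh, A₁ - A₃⟫_ℝ := by
    rwa [hD, hE, add_sub_add_left_eq_sub, inner_sub_right, real_inner_smul_right,
      real_inner_smul_right, sub_eq_zero] at hperp
  have hxy : x * ⟪nh, A₁ - A₃⟫_ℝ + y * ⟪nh, A₂ - A₃⟫_ℝ = 1 := by
    rw [← real_inner_smul_right, ← real_inner_smul_right, ← inner_add_right, ← hnh,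
      real_inner_self_eq_norm_sq, hn, one_pow]
  have hflux (f : EuclideanSpace ℝ (Fin 2) →ᵃ[ℝ] ℝ) :
      f.linear nh = x * (f A₁ - f A₃) + y * (f A₂ - f A₃) := by
    simp [hnh, ← vsub_eq_sub, AffineMap.linearMap_vsub]
  have hT := transmissionSystem_bijective (Set.Ioo_subset_Ioc_self hk₁)
    (Set.Ioo_subset_Icc_self hk₂) hβp hβm hmn hxy
  let b : AffineBasis (Fin 3) ℝ (EuclideanSpace ℝ (Fin 2)) :=
    ⟨![A₁, A₂, A₃], hind, hind.affineSpan_eq_top_iff_card_eq_finrank_add_one.2 (by simp)⟩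
  have hb := b.bijective_affineMap_eval
  refine (existsUnique_congr fun p => ?_).2
    ((hb.prodMap hb).existsUnique_iff.1 (hT.existsUnique (0, 0, 0, N₁, N₂, N₃)))
  obtain ⟨f, g⟩ := p
  rw [hD, hE, hflux, hflux, AffineMap.integral_segment_ite _ _ _ _ (Set.Ioo_subset_Icc_self hk₁),
    AffineMap.integral_segment_ite _ _ _ _ (Set.Ioo_subset_Icc_self hk₂),
    AffineMap.integral_segment, f.apply_add_smul_sub, f.apply_add_smul_sub, g.apply_add_smul_sub,
    g.apply_add_smul_sub]
  simp only [transmissionSystem, LinearMap.coe_mk, AddHom.coe_mk, Prod.map, Prod.mk.injEq,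
    sub_eq_zero]
  exact Iff.rfl
end
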